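/- Let N be a proper binary level-1 phylogenetic network on n ≥ 3 leaves. Then the number of vertices is at most 3n−2 and the number of arcs is at most 3.5(n−1). If n = 3 these bounds are tight and N must be a simple level-1 network. -/

import Mathlib

open Relation

noncomputable section

/-- The interior vertices of a path represented as the list of its vertices. -/
def listInterior {α : Type*} (p : List α) : List α := p.tail.dropLast

/-- A (candidate) phylogenetic network: a finite directed graph together with an
injective labelling of a set `X` into its vertices (the leaves). -/
structure Net (X : Type) : Type 1 where
  V : Type
  finV : Finite V
  arc : V → V → Prop
  leaf : X → V
  leaf_inj : Function.Injective leaf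

attribute [instance] Net.finV

namespace Net

variable {X : Type} (N : Net X)

def outdeg (v : N.V) : ℕ := {w | N.arc v w}.ncard
def indeg (v : N.V) : ℕ := {u | N.arc u v}.ncard
def IsLeaf (v : N.V) : Prop := ∃ x, N.leaf x = v
def IsHybrid (v : N.V) : Prop := 2 ≤ N.indeg v

/-- The axioms of a rooted phylogenetic network on `X`: acyclic, the leaves are exactly
the vertices of out-degree 0 (and have in-degree one), there is a root of in-degree 0 and
out-degree at least 2 from which every vertex is reachable, and every non-root interior
vertex is either a split vertex or a hybrid vertex. -/
def IsPhylo : Prop :=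
  (∀ v, ¬ TransGen N.arc v v) ∧
  (∀ v, N.outdeg v = 0 ↔ N.IsLeaf v) ∧
  (∀ x, N.indeg (N.leaf x) = 1) ∧
  (∃ ρ, N.indeg ρ = 0 ∧ 2 ≤ N.outdeg ρ ∧ ∀ v, ReflTransGen N.arc ρ v) ∧
  (∀ v, ¬ N.IsLeaf v →
    N.indeg v = 0 ∨ (N.indeg v = 1 ∧ 2 ≤ N.outdeg v) ∨ (2 ≤ N.indeg v ∧ 1 ≤ N.outdeg v))

/-- A binary phylogenetic network: the root and split vertices have out-degree 2,
hybrid vertices have in-degree 2 and out-degree 1. -/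
def IsBinary : Prop :=
  N.IsPhylo ∧
  ∀ v, N.IsLeaf v ∨ (N.indeg v ≤ 1 ∧ N.outdeg v = 2) ∨ (N.indeg v = 2 ∧ N.outdeg v = 1)

/-- The underlying undirected graph. -/
def ugraph : SimpleGraph N.V where
  Adj v w := v ≠ w ∧ (N.arc v w ∨ N.arc w v)
  symm := ⟨fun _ _ h => ⟨Ne.symm h.1, h.2.symm⟩⟩
  loopless := ⟨fun _ h => h.1 rfl⟩

/-- A binary level-1 network: binary, every cycle of the underlying graph has at least
4 vertices, and every cycle of the underlying graph contains at most one hybrid vertex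
(equivalently, every biconnected component contains at most one hybrid vertex). -/
def IsLevel1 : Prop :=
  N.IsBinary ∧
  (∀ (c : N.V) (p : N.ugraph.Walk c c), p.IsCycle → 4 ≤ p.length) ∧
  (∀ (c : N.V) (p : N.ugraph.Walk c c), p.IsCycle →
    ∀ v ∈ p.support, ∀ w ∈ p.support, N.IsHybrid v → N.IsHybrid w → v = w)

/-- The number of galls of a binary level-1 network (each gall contains exactly one
hybrid vertex, and conversely). -/
def gallCount : ℕ := {v : N.V | N.IsHybrid v}.ncard

def numVertices : ℕ := Nat.card N.V
def numArcs : ℕ := {p : N.V × N.V | N.arc p.1 p.2}.ncard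

/-- An arc whose deletion disconnects the underlying graph. -/
def CutArc (u v : N.V) : Prop :=
  N.arc u v ∧ ¬ (N.ugraph.deleteEdges {s(u, v)}).Connected

/-- The number `c_N` of non-trivial cut arcs (cut arcs whose head is not a leaf). -/
def numNontrivialCutArcs : ℕ :=
  {p : N.V × N.V | N.CutArc p.1 p.2 ∧ ¬ N.IsLeaf p.2}.ncard

/-- The cluster of a vertex: the set of leaf labels below or equal to it. -/
def cluster (v : N.V) : Set X := {x | ReflTransGen N.arc v (N.leaf x)}

/-- The hardwired cluster system. -/
def clusterSystem : Set (Set X) := {C | ∃ v, C = N.cluster v}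

/-- A network whose every vertex has in-degree at most 1 is a tree. -/
def IsTree : Prop := ∀ v, N.indeg v ≤ 1

/-- A directed path from `u` to `v`, given as the list of all its vertices. -/
def IsDiPath (p : List N.V) (u v : N.V) : Prop :=
  p.Chain' N.arc ∧ p.head? = some u ∧ p.getLast? = some v ∧ p.Nodup

/-- `N` displays `T`: a subgraph of `N` is a subdivision of `T`, i.e. there is an
injection of the vertices of `T` into those of `N`, fixing the leaf labels, together
with internally disjoint directed paths realizing the arcs of `T`. -/
def Displays (T : Net X) : Prop :=
  ∃ (φ : T.V → N.V) (P : T.V → T.V → List N.V),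
    Function.Injective φ ∧
    (∀ x, φ (T.leaf x) = N.leaf x) ∧
    (∀ u v, T.arc u v → N.IsDiPath (P u v) (φ u) (φ v)) ∧
    (∀ u v, T.arc u v → ∀ w ∈ listInterior (P u v), ∀ z, φ z ≠ w) ∧
    (∀ u v u' v', T.arc u v → T.arc u' v' → (u, v) ≠ (u', v') →
      ∀ w ∈ listInterior (P u v), w ∉ listInterior (P u' v'))

/-- The softwired cluster system: all clusters of phylogenetic trees on `X`
displayed by `N`. -/
def softwired : Set (Set X) :=
  {C | ∃ T : Net X, T.IsPhylo ∧ T.IsTree ∧ N.Displays T ∧ C ∈ T.clusterSystem}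

/-- The triplet `ab|c` is consistent with `N`. -/
def Consistent (a b c : X) : Prop :=
  a ≠ b ∧ a ≠ c ∧ b ≠ c ∧
  ∃ v w : N.V, v ≠ w ∧ ∃ p₁ p₂ p₃ p₄ : List N.V,
    N.IsDiPath p₁ v (N.leaf c) ∧ N.IsDiPath p₂ v w ∧
    N.IsDiPath p₃ w (N.leaf a) ∧ N.IsDiPath p₄ w (N.leaf b) ∧
    [p₁, p₂, p₃, p₄].Pairwise (fun p q => ∀ x ∈ listInterior p, x ∉ listInterior q)

/-- The triplet system `R(N)` induced by `N`; the triplet `ab|c` is represented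
by the pair `(s(a,b), c)`. -/
def tripletSet : Set (Sym2 X × X) :=
  {t | ∃ a b : X, t.1 = s(a, b) ∧ N.Consistent a b t.2}

/-- Equivalence of networks: an isomorphism of directed graphs fixing leaf labels. -/
def Equiv (N' : Net X) : Prop :=
  ∃ e : N.V ≃ N'.V, (∀ u v, N.arc u v ↔ N'.arc (e u) (e v)) ∧
    ∀ x, e (N.leaf x) = N'.leaf x

/-- A vertex lying on some cycle of the underlying graph (i.e. on a gall). -/
def OnGall (v : N.V) : Prop :=
  ∃ (c : N.V) (p : N.ugraph.Walk c c), p.IsCycle ∧ v ∈ p.support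

/-- A simple level-1 network: exactly one gall, and every leaf is adjacent to a
vertex of that gall. -/
def IsSimple : Prop :=
  N.gallCount = 1 ∧ ∀ (x : X) (u : N.V), N.arc u (N.leaf x) → N.OnGall u

/-- 4-outwards: the underlying graph has no cycle of length four or less. -/
def FourOutwards : Prop :=
  ∀ (c : N.V) (p : N.ugraph.Walk c c), p.IsCycle → 5 ≤ p.length

/-- Saturated: no vertex is incident with more than one cut arc. -/
def IsSaturated : Prop :=
  ∀ v : N.V, {p : N.V × N.V | N.CutArc p.1 p.2 ∧ (p.1 = v ∨ p.2 = v)}.ncard ≤ 1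

/-- A highest cut arc: no cut arc lies above it. -/
def HighestCutArc (u v : N.V) : Prop :=
  N.CutArc u v ∧ ¬ ∃ u' v', N.CutArc u' v' ∧ ReflTransGen N.arc v' u

/-- The partition `Cut(N)` of `X` induced by the highest cut arcs. -/
def cutPartition : Set (Set X) :=
  {C | ∃ u v, N.HighestCutArc u v ∧ C = N.cluster v}

/-- `S` is an SN-set of `R(N)`: there is no triplet `xy|z ∈ R(N)` with
`x, z ∈ S` and `y ∉ S`. -/
def IsSNSet (S : Set X) : Prop :=
  ∀ a b c : X, N.Consistent a b c → a ∈ S → c ∈ S → b ∈ S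

/-- A maximal SN-set: a non-trivial SN-set not strictly contained in any
non-trivial SN-set. -/
def IsMaximalSNSet (S : Set X) : Prop :=
  N.IsSNSet S ∧ S ≠ Set.univ ∧
  ∀ S' : Set X, N.IsSNSet S' → S' ≠ Set.univ → S ⊆ S' → S = S'

/-- Every gall (cycle of the underlying graph) has exactly three outgoing arcs. -/
def EveryGallThreeOutgoing : Prop :=
  ∀ (c : N.V) (p : N.ugraph.Walk c c), p.IsCycle →
    {q : N.V × N.V | N.arc q.1 q.2 ∧ q.1 ∈ p.support ∧ q.2 ∉ p.support}.ncard = 3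

end Net

end

/-!
Counting in- and out-degrees, a binary network with `n` leaves, `s` split vertices (the root
included) and `h` hybrid vertices has `n + s + h` vertices and `2s + h = n + s + 2h - 1` arcs,
so `s = n + h - 1`. In a level-1 network the galls of distinct hybrid vertices are
vertex-disjoint and each contains at least three split vertices, so `3h ≤ s`, i.e.
`2h ≤ n - 1`, which gives both bounds. For `n = 3` it forces `h = 1` and `s = 3`, so the unique
gall contains every split vertex, in particular every parent of a leaf.

Disjointness of galls: every cycle contains a hybrid vertex whose two cycle edges are its two
in-arcs, and the symmetric difference of two cycles in a graph of maximum degree three is a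
disjoint union of cycles. Hence two galls through the same hybrid vertex coincide. Two galls
sharing a vertex share an edge there (degree three again), and a cycle inside their symmetric
difference would have to coincide with one of them, yet it avoids that common edge.
-/

open scoped symmDiff

namespace Set

variable {α : Type*} {A B : Set α}

lemma inter_nonempty_of_ncard_union_le (hA : A.ncard = 2) (hB : B.ncard = 2)
    (hAB : (A ∪ B).ncard ≤ 3) : (A ∩ B).Nonempty := by
  have hAfin := finite_of_ncard_ne_zero (s := A) (by omega)
  have hBfin := finite_of_ncard_ne_zero (s := B) (by omega)
  rw [← ncard_pos (hAfin.inter_of_left B)]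
  have := ncard_union_add_ncard_inter A B hAfin hBfin
  omega

lemma ncard_symmDiff_eq_two [Finite α] (hA : A.ncard = 0 ∨ A.ncard = 2)
    (hB : B.ncard = 0 ∨ B.ncard = 2) (hAB : (A ∪ B).ncard ≤ 3) (hne : (A ∆ B).Nonempty) :
    (A ∆ B).ncard = 2 := by
  have hunion := ncard_union_add_ncard_inter A B
  have hdiff := ncard_sdiff_add_ncard_of_subset (s := A ∩ B) (t := A ∪ B)
    (inter_subset_left.trans subset_union_left)
  have hA' := ncard_inter_le_ncard_left A B
  have hB' := ncard_inter_le_ncard_right A B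
  have hpos := hne.ncard_pos
  simp only [symmDiff_eq_sup_sdiff_inf, Set.sup_eq_union, Set.inf_eq_inter] at hpos ⊢
  omega

lemma ncard_setOf_eq_sum [Fintype α] (p : α → Prop) [DecidablePred p] :
    {a | p a}.ncard = ∑ a, if p a then 1 else 0 := by
  rw [Set.ncard_eq_toFinset_card', Set.toFinset_ofPred, Finset.card_filter]

end Set

namespace SimpleGraph

variable {V : Type*} {G : SimpleGraph V}

lemma Walk.IsCycle.exists_adj_toSubgraph {u v : V} {p : G.Walk u u} (hp : p.IsCycle)
    (hv : v ∈ p.support) : ∃ w, p.toSubgraph.Adj v w :=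
  Set.nonempty_of_ncard_ne_zero (s := p.toSubgraph.neighborSet v)
    (by rw [hp.ncard_neighborSet_toSubgraph_eq_two hv]; norm_num)

lemma Walk.IsCycle.ncard_neighborSet_toSubgraph {u v : V} {p : G.Walk u u} (hp : p.IsCycle) :
    (p.toSubgraph.neighborSet v).ncard = 0 ∨ (p.toSubgraph.neighborSet v).ncard = 2 := by
  by_cases hv : v ∈ p.support
  · exact Or.inr (hp.ncard_neighborSet_toSubgraph_eq_two hv)
  · have : p.toSubgraph.neighborSet v = ∅ :=
      Set.eq_empty_of_forall_notMem fun w hw => hv (Walk.mem_support_of_adj_toSubgraph hw)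
    exact Or.inl (by rw [this, Set.ncard_empty])

lemma isCycles_symmDiff_toSubgraph [Finite V] (hG : ∀ v, (G.neighborSet v).ncard ≤ 3) {u v : V}
    {p : G.Walk u u} {q : G.Walk v v} (hp : p.IsCycle) (hq : q.IsCycle) :
    (p.toSubgraph.spanningCoe ∆ q.toSubgraph.spanningCoe).IsCycles := by
  intro x hx
  have hnbr : (p.toSubgraph.spanningCoe ∆ q.toSubgraph.spanningCoe).neighborSet x =
      p.toSubgraph.neighborSet x ∆ q.toSubgraph.neighborSet x := by
    ext y
    simp [symmDiff_def]
  rw [hnbr] at hx ⊢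
  refine Set.ncard_symmDiff_eq_two hp.ncard_neighborSet_toSubgraph
    hq.ncard_neighborSet_toSubgraph ((Set.ncard_le_ncard ?_).trans (hG x)) hx
  exact Set.union_subset (p.toSubgraph.neighborSet_subset x) (q.toSubgraph.neighborSet_subset x)

lemma exists_isCycle_toSubgraph_adj_xor [Finite V] (hG : ∀ v, (G.neighborSet v).ncard ≤ 3)
    {u v x y : V} {p : G.Walk u u} {q : G.Walk v v} (hp : p.IsCycle) (hq : q.IsCycle)
    (hxy : p.toSubgraph.Adj x y) (hxy' : ¬ q.toSubgraph.Adj x y) :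
    ∃ (w : V) (c : G.Walk w w), c.IsCycle ∧
      (∀ a b, c.toSubgraph.Adj a b → Xor (p.toSubgraph.Adj a b) (q.toSubgraph.Adj a b)) ∧
      ∀ a ∈ c.support, a ∈ p.support ∨ a ∈ q.support := by
  set H := p.toSubgraph.spanningCoe ∆ q.toSubgraph.spanningCoe
  have hH : H.Adj x y := by simp [H, symmDiff_def, hxy, hxy']
  have hle : H ≤ G := fun a b h => by
    rcases h with ⟨h, -⟩ | ⟨h, -⟩
    exacts [h.adj_sub, h.adj_sub]
  obtain ⟨w, c, hc, -⟩ := adj_and_reachable_delete_edges_iff_exists_cycle.mp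
    ⟨hH, (isCycles_symmDiff_toSubgraph hG hp hq).reachable_deleteEdges hH⟩
  have hxor : ∀ a b, (c.mapLe hle).toSubgraph.Adj a b →
      Xor (p.toSubgraph.Adj a b) (q.toSubgraph.Adj a b) := by
    intro a b hab
    rw [Walk.adj_toSubgraph_mapLe] at hab
    simpa [H, symmDiff_def, Xor] using hab.adj_sub
  refine ⟨w, c.mapLe hle, hc.mapLe hle, hxor, fun a ha => ?_⟩
  obtain ⟨b, hab⟩ := (hc.mapLe hle).exists_adj_toSubgraph ha
  rcases hxor a b hab with ⟨h, -⟩ | ⟨h, -⟩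
  exacts [Or.inl (Walk.mem_support_of_adj_toSubgraph h),
    Or.inr (Walk.mem_support_of_adj_toSubgraph h)]

end SimpleGraph

namespace Net

open SimpleGraph

section

variable {X : Type} (N : Net X)

def IsSplit (v : N.V) : Prop := ¬ N.IsLeaf v ∧ N.outdeg v = 2

noncomputable def numSplitVertices : ℕ := {v : N.V | N.IsSplit v}.ncard

end

variable {X : Type} {N : Net X}

lemma adj_of_arc (hac : ∀ v, ¬ TransGen N.arc v v) {u v : N.V} (h : N.arc u v) :
    N.ugraph.Adj u v :=
  ⟨fun huv => hac u (.single (huv ▸ h)), Or.inl h⟩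

lemma ncard_neighborSet_le (v : N.V) :
    (N.ugraph.neighborSet v).ncard ≤ N.indeg v + N.outdeg v :=
  calc (N.ugraph.neighborSet v).ncard ≤ ({u | N.arc u v} ∪ {w | N.arc v w}).ncard :=
        Set.ncard_le_ncard fun _ hw => hw.2.symm
    _ ≤ N.indeg v + N.outdeg v := Set.ncard_union_le _ _

lemma IsPhylo.not_isLeaf_of_arc (hN : N.IsPhylo) {u w : N.V} (h : N.arc u w) :
    ¬ N.IsLeaf u := fun hu => by
  have hout : 0 < N.outdeg u := (Set.ncard_pos (Set.toFinite _)).mpr ⟨w, h⟩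
  have := (hN.2.1 u).mpr hu
  omega

lemma IsBinary.trichotomy (hN : N.IsBinary) (v : N.V) :
    (N.IsLeaf v ∧ ¬ N.IsSplit v ∧ ¬ N.IsHybrid v ∧ N.indeg v = 1 ∧ N.outdeg v = 0) ∨
    (¬ N.IsLeaf v ∧ N.IsSplit v ∧ ¬ N.IsHybrid v ∧ N.indeg v ≤ 1 ∧ N.outdeg v = 2) ∨
    (¬ N.IsLeaf v ∧ ¬ N.IsSplit v ∧ N.IsHybrid v ∧ N.indeg v = 2 ∧ N.outdeg v = 1) := by
  obtain ⟨⟨-, hleaf, hleafin, -, -⟩, hdeg⟩ := hN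
  simp only [IsSplit, IsHybrid, ← hleaf]
  rcases hdeg v with ⟨x, rfl⟩ | hv | hv
  · have := (hleaf _).mpr ⟨x, rfl⟩
    have := hleafin x
    omega
  · omega
  · omega

lemma IsBinary.ncard_neighborSet_le_three (hN : N.IsBinary) (v : N.V) :
    (N.ugraph.neighborSet v).ncard ≤ 3 := by
  have := ncard_neighborSet_le v
  rcases hN.trichotomy v with ⟨-, -, -, h⟩ | ⟨-, -, -, h⟩ | ⟨-, -, -, h⟩ <;> omega

lemma IsBinary.indeg_le_two (hN : N.IsBinary) (v : N.V) : N.indeg v ≤ 2 := by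
  rcases hN.trichotomy v with ⟨-, -, -, h⟩ | ⟨-, -, -, h⟩ | ⟨-, -, -, h⟩ <;> omega

lemma numArcs_eq_sum_outdeg [Fintype N.V] : N.numArcs = ∑ v, N.outdeg v := by
  classical
  simp only [numArcs, outdeg, Set.ncard_setOf_eq_sum, Fintype.sum_prod_type]

lemma numArcs_eq_sum_indeg [Fintype N.V] : N.numArcs = ∑ v, N.indeg v := by
  classical
  simp only [numArcs, indeg, Set.ncard_setOf_eq_sum, Fintype.sum_prod_type_right]

lemma IsBinary.numVertices_eq (hN : N.IsBinary) :
    N.numVertices = Nat.card X + N.numSplitVertices + N.gallCount := by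
  classical
  have := Fintype.ofFinite N.V
  have hleaves : {v | N.IsLeaf v}.ncard = Nat.card X := Set.ncard_range_of_injective N.leaf_inj
  rw [← hleaves, numVertices, numSplitVertices, gallCount, Nat.card_eq_fintype_card,
    Fintype.card_eq_sum_ones, Set.ncard_setOf_eq_sum, Set.ncard_setOf_eq_sum,
    Set.ncard_setOf_eq_sum, ← Finset.sum_add_distrib, ← Finset.sum_add_distrib]
  refine Finset.sum_congr rfl fun v _ => ?_
  rcases hN.trichotomy v with ⟨h₁, h₂, h₃, -⟩ | ⟨h₁, h₂, h₃, -⟩ | ⟨h₁, h₂, h₃, -⟩ <;>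
    simp [h₁, h₂, h₃]

lemma IsBinary.numArcs_eq (hN : N.IsBinary) :
    N.numArcs = 2 * N.numSplitVertices + N.gallCount := by
  classical
  have := Fintype.ofFinite N.V
  rw [numArcs_eq_sum_outdeg, numSplitVertices, gallCount, Set.ncard_setOf_eq_sum,
    Set.ncard_setOf_eq_sum, Finset.mul_sum, ← Finset.sum_add_distrib]
  refine Finset.sum_congr rfl fun v _ => ?_
  rcases hN.trichotomy v with ⟨-, h₂, h₃, -, h⟩ | ⟨-, h₂, h₃, -, h⟩ | ⟨-, h₂, h₃, -, h⟩ <;>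
    simp [h₂, h₃, h]

lemma IsBinary.numArcs_add_one (hN : N.IsBinary) :
    N.numArcs + 1 = Nat.card X + N.numSplitVertices + 2 * N.gallCount := by
  classical
  have := Fintype.ofFinite N.V
  obtain ⟨ρ, hρ, -, hreach⟩ := hN.1.2.2.2.1
  have hleaves : {v | N.IsLeaf v}.ncard = Nat.card X := Set.ncard_range_of_injective N.leaf_inj
  have hroot : (1 : ℕ) = ∑ v : N.V, if v = ρ then 1 else 0 := by simp
  rw [numArcs_eq_sum_indeg, hroot, ← hleaves, numSplitVertices, gallCount,
    Set.ncard_setOf_eq_sum, Set.ncard_setOf_eq_sum, Set.ncard_setOf_eq_sum, Finset.mul_sum,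
    ← Finset.sum_add_distrib, ← Finset.sum_add_distrib, ← Finset.sum_add_distrib]
  refine Finset.sum_congr rfl fun v _ => ?_
  rcases eq_or_ne v ρ with rfl | hvρ
  · rcases hN.trichotomy v with ⟨-, -, -, h, -⟩ | ⟨h₁, h₂, h₃, -⟩ | ⟨-, -, -, h, -⟩
    · omega
    · simp [h₁, h₂, h₃, hρ]
    · omega
  · obtain ⟨u, -, hu⟩ := (hreach v).cases_tail.resolve_left hvρ
    have hin : 1 ≤ N.indeg v := (Set.ncard_pos (Set.toFinite _)).mpr ⟨u, hu⟩
    rcases hN.trichotomy v with ⟨h₁, h₂, h₃, h, -⟩ | ⟨h₁, h₂, h₃, h, -⟩ | ⟨h₁, h₂, h₃, h, -⟩ <;>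
      simp [h₁, h₂, h₃, hvρ] <;> omega

lemma IsPhylo.onGall_of_isHybrid (hN : N.IsPhylo) {v : N.V} (hv : N.IsHybrid v) :
    N.OnGall v := by
  obtain ⟨hac, -, -, ⟨ρ, -, -, hreach⟩, -⟩ := hN
  obtain ⟨a, b, ha, hb, hab⟩ := (Set.one_lt_ncard_iff (Set.toFinite _)).mp hv
  change N.arc a v at ha
  change N.arc b v at hb
  let G := N.ugraph.deleteEdges {s(a, v)}
  -- a directed path from the root that avoids `v` cannot use the arc `a → v`
  have hroot : ∀ w, ReflTransGen N.arc ρ w → ¬ ReflTransGen N.arc v w → G.Reachable ρ w := by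
    intro w hw hvw
    induction hw with
    | refl => rfl
    | @tail x w _ hxw ih =>
      refine (ih fun h => hvw (h.tail hxw)).trans (Adj.reachable ?_)
      refine deleteEdges_adj.mpr ⟨adj_of_arc hac hxw, ?_⟩
      rw [Set.mem_singleton_iff, Sym2.eq_iff]
      rintro (⟨-, rfl⟩ | ⟨rfl, -⟩)
      exacts [hvw .refl, hvw (.single hxw)]
  have hav : G.Reachable a v := by
    refine (hroot a (hreach a) fun h => hac v (.tail' h ha)).symm.trans
      ((hroot b (hreach b) fun h => hac v (.tail' h hb)).trans (Adj.reachable ?_))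
    refine deleteEdges_adj.mpr ⟨adj_of_arc hac hb, ?_⟩
    rw [Set.mem_singleton_iff, Sym2.eq_iff]
    rintro (⟨rfl, -⟩ | ⟨rfl, -⟩)
    exacts [hab rfl, hac _ (.single hb)]
  obtain ⟨c, p, hp, hav⟩ := adj_and_reachable_delete_edges_iff_exists_cycle.mp
    ⟨adj_of_arc hac ha, hav⟩
  exact ⟨c, p, hp, p.snd_mem_support_of_mem_edges hav⟩

lemma exists_isHybrid_sink (hac : ∀ v, ¬ TransGen N.arc v v) {o : N.V}
    {W : N.ugraph.Walk o o} (hW : W.IsCycle) :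
    ∃ z ∈ W.support, N.IsHybrid z ∧ W.toSubgraph.neighborSet z ⊆ {u | N.arc u z} := by
  let below := Function.swap (TransGen N.arc)
  have : IsTrans N.V below := ⟨fun _ _ _ h₁ h₂ => h₂.trans h₁⟩
  have : Std.Irrefl below := ⟨hac⟩
  obtain ⟨z, hz, hmin⟩ := (Finite.wellFounded_of_trans_of_irrefl below).has_min
    {w | w ∈ W.support} ⟨o, W.start_mem_support⟩
  have hsub : W.toSubgraph.neighborSet z ⊆ {u | N.arc u z} := fun w hw =>
    hw.adj_sub.2.resolve_left fun h =>
      hmin w (Walk.mem_support_of_adj_toSubgraph hw.symm) (.single h)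
  refine ⟨z, hz, ?_, hsub⟩
  calc 2 = (W.toSubgraph.neighborSet z).ncard := (hW.ncard_neighborSet_toSubgraph_eq_two hz).symm
    _ ≤ N.indeg z := Set.ncard_le_ncard hsub

lemma IsLevel1.neighborSet_toSubgraph_eq (hN : N.IsLevel1) {o v : N.V}
    {W : N.ugraph.Walk o o} (hW : W.IsCycle) (hv : v ∈ W.support) (hhyb : N.IsHybrid v) :
    W.toSubgraph.neighborSet v = {u | N.arc u v} := by
  obtain ⟨hbin, -, hone⟩ := hN
  obtain ⟨z, hz, hzhyb, hsub⟩ := exists_isHybrid_sink hbin.1.1 hW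
  obtain rfl := hone o W hW z hz v hv hzhyb hhyb
  refine Set.eq_of_subset_of_ncard_le hsub ?_
  rw [hW.ncard_neighborSet_toSubgraph_eq_two hz]
  exact hbin.indeg_le_two z

lemma IsLevel1.toSubgraph_adj_of_toSubgraph_adj (hN : N.IsLevel1) {v o₁ o₂ : N.V}
    {W₁ : N.ugraph.Walk o₁ o₁} {W₂ : N.ugraph.Walk o₂ o₂} (h₁ : W₁.IsCycle) (h₂ : W₂.IsCycle)
    (hv₁ : v ∈ W₁.support) (hv₂ : v ∈ W₂.support) (hv : N.IsHybrid v) {x y : N.V}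
    (hxy : W₁.toSubgraph.Adj x y) : W₂.toSubgraph.Adj x y := by
  have ⟨hbin, _, hone⟩ := hN
  by_contra hxy'
  obtain ⟨o, K, hK, hxor, hsupp⟩ :=
    exists_isCycle_toSubgraph_adj_xor hbin.ncard_neighborSet_le_three h₁ h₂ hxy hxy'
  obtain ⟨z, hz, hzhyb, -⟩ := exists_isHybrid_sink hbin.1.1 hK
  obtain rfl : z = v := by
    rcases hsupp z hz with hz' | hz'
    exacts [hone _ W₁ h₁ z hz' v hv₁ hzhyb hv, hone _ W₂ h₂ z hz' v hv₂ hzhyb hv]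
  -- at the hybrid `z`, all three cycles use exactly the two in-arcs
  obtain ⟨w, hw⟩ := hK.exists_adj_toSubgraph hz
  have hw₁ : w ∈ W₁.toSubgraph.neighborSet z := by
    rw [hN.neighborSet_toSubgraph_eq h₁ hv₁ hv, ← hN.neighborSet_toSubgraph_eq hK hz hv]
    exact hw
  have hw₂ : w ∈ W₂.toSubgraph.neighborSet z := by
    rw [hN.neighborSet_toSubgraph_eq h₂ hv₂ hv, ← hN.neighborSet_toSubgraph_eq hK hz hv]
    exact hw
  rcases hxor z w hw with ⟨-, h⟩ | ⟨-, h⟩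
  exacts [h hw₂, h hw₁]

lemma IsLevel1.toSubgraph_adj_iff (hN : N.IsLevel1) {v o₁ o₂ : N.V}
    {W₁ : N.ugraph.Walk o₁ o₁} {W₂ : N.ugraph.Walk o₂ o₂} (h₁ : W₁.IsCycle) (h₂ : W₂.IsCycle)
    (hv₁ : v ∈ W₁.support) (hv₂ : v ∈ W₂.support) (hv : N.IsHybrid v) {x y : N.V} :
    W₁.toSubgraph.Adj x y ↔ W₂.toSubgraph.Adj x y :=
  ⟨hN.toSubgraph_adj_of_toSubgraph_adj h₁ h₂ hv₁ hv₂ hv,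
    hN.toSubgraph_adj_of_toSubgraph_adj h₂ h₁ hv₂ hv₁ hv⟩

lemma IsLevel1.disjoint_support (hN : N.IsLevel1) {v v' o₁ o₂ : N.V}
    {W₁ : N.ugraph.Walk o₁ o₁} {W₂ : N.ugraph.Walk o₂ o₂} (h₁ : W₁.IsCycle) (h₂ : W₂.IsCycle)
    (hv₁ : v ∈ W₁.support) (hv₂ : v' ∈ W₂.support) (hv : N.IsHybrid v) (hv' : N.IsHybrid v')
    (hne : v ≠ v') : W₁.support.Disjoint W₂.support := by
  have ⟨hbin, _, hone⟩ := hN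
  have hdeg := hbin.ncard_neighborSet_le_three
  intro u hu₁ hu₂
  obtain ⟨w, hw₁, hw₂⟩ := Set.inter_nonempty_of_ncard_union_le
    (h₁.ncard_neighborSet_toSubgraph_eq_two hu₁) (h₂.ncard_neighborSet_toSubgraph_eq_two hu₂)
    ((Set.ncard_le_ncard (Set.union_subset (W₁.toSubgraph.neighborSet_subset u)
      (W₂.toSubgraph.neighborSet_subset u))).trans (hdeg u))
  obtain ⟨a, ha⟩ := h₁.exists_adj_toSubgraph hv₁
  have ha' : ¬ W₂.toSubgraph.Adj v a := fun h =>
    hne (hone _ W₂ h₂ v (Walk.mem_support_of_adj_toSubgraph h) v' hv₂ hv hv')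
  obtain ⟨o, K, hK, hxor, hsupp⟩ := exists_isCycle_toSubgraph_adj_xor hdeg h₁ h₂ ha ha'
  obtain ⟨z, hz, hzhyb, -⟩ := exists_isHybrid_sink hbin.1.1 hK
  have hKuw : K.toSubgraph.Adj u w := by
    rcases hsupp z hz with hz' | hz'
    exacts [(hN.toSubgraph_adj_iff hK h₁ hz hz' hzhyb).mpr hw₁,
      (hN.toSubgraph_adj_iff hK h₂ hz hz' hzhyb).mpr hw₂]
  rcases hxor u w hKuw with ⟨-, h⟩ | ⟨-, h⟩
  exacts [h hw₂, h hw₁]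

lemma IsBinary.not_isLeaf_of_mem_support (hN : N.IsBinary) {o u : N.V}
    {W : N.ugraph.Walk o o} (hW : W.IsCycle) (hu : u ∈ W.support) : ¬ N.IsLeaf u := by
  have h2 : 2 ≤ (N.ugraph.neighborSet u).ncard :=
    (hW.ncard_neighborSet_toSubgraph_eq_two hu).symm.le.trans
      (Set.ncard_le_ncard (W.toSubgraph.neighborSet_subset u))
  have := ncard_neighborSet_le u
  rcases hN.trichotomy u with ⟨-, -, -, h⟩ | ⟨h, -⟩ | ⟨h, -⟩
  · omega
  · exact h
  · exact h

lemma IsLevel1.isSplit_of_mem_support (hN : N.IsLevel1) {o u v : N.V}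
    {W : N.ugraph.Walk o o} (hW : W.IsCycle) (hu : u ∈ W.support) (hv : v ∈ W.support)
    (hhyb : N.IsHybrid v) (huv : u ≠ v) : N.IsSplit u := by
  obtain ⟨hbin, -, hone⟩ := hN
  rcases hbin.trichotomy u with ⟨h, -⟩ | ⟨-, h, -⟩ | ⟨-, -, h, -⟩
  · exact absurd h (hbin.not_isLeaf_of_mem_support hW hu)
  · exact h
  · exact absurd (hone o W hW u hu v hv h hhyb) huv

lemma IsLevel1.three_mul_gallCount_le (hN : N.IsLevel1) :
    3 * N.gallCount ≤ {v | N.IsSplit v ∧ N.OnGall v}.ncard := by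
  classical
  have := Fintype.ofFinite N.V
  have ⟨hbin, hgirth, _⟩ := hN
  choose! o W hW hvW using fun v (hv : N.IsHybrid v) => hbin.1.onGall_of_isHybrid hv
  set H := {v | N.IsHybrid v}.toFinset
  let S v := (W v).support.tail.toFinset.erase v
  have mem_support_of_mem : ∀ v u, u ∈ S v → u ∈ (W v).support := fun v u hu =>
    List.mem_of_mem_tail (List.mem_toFinset.mp (Finset.mem_of_mem_erase hu))
  have hS : ∀ v ∈ H, 3 ≤ (S v).card := by
    intro v hv
    rw [Set.mem_toFinset] at hv
    change 3 ≤ ((W v).support.tail.toFinset.erase v).card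
    have h4 := hgirth _ (W v) (hW v hv)
    have := Finset.pred_card_le_card_erase (s := (W v).support.tail.toFinset) (a := v)
    rw [List.toFinset_card_of_nodup (hW v hv).support_nodup, List.length_tail,
      Walk.length_support] at this
    omega
  have hSsub : ∀ v ∈ H, S v ⊆ {u | N.IsSplit u ∧ N.OnGall u}.toFinset := by
    intro v hv u hu
    rw [Set.mem_toFinset] at hv ⊢
    have hu' := mem_support_of_mem v u hu
    exact ⟨hN.isSplit_of_mem_support (hW v hv) hu' (hvW v hv) hv (Finset.ne_of_mem_erase hu),
      _, W v, hW v hv, hu'⟩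
  have hdisj : (H : Set N.V).PairwiseDisjoint S := by
    intro v hv v' hv' hne
    simp only [H, Set.coe_toFinset] at hv hv'
    exact Finset.disjoint_left.mpr fun u hu hu' =>
      hN.disjoint_support (hW v hv) (hW v' hv') (hvW v hv) (hvW v' hv') hv hv' hne
        (mem_support_of_mem v u hu) (mem_support_of_mem v' u hu')
  calc 3 * N.gallCount = ∑ v ∈ H, 3 := by
        rw [Finset.sum_const, smul_eq_mul, mul_comm, gallCount, Set.ncard_eq_toFinset_card']
    _ ≤ ∑ v ∈ H, (S v).card := Finset.sum_le_sum hS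
    _ = (H.biUnion S).card := (Finset.card_biUnion hdisj).symm
    _ ≤ {u | N.IsSplit u ∧ N.OnGall u}.toFinset.card :=
        Finset.card_le_card (Finset.biUnion_subset.mpr hSsub)
    _ = _ := (Set.ncard_eq_toFinset_card' _).symm

end Net

theorem stmt2_general {X : Type} (N : Net X)
    (hlev : N.IsLevel1) (hproper : 1 ≤ N.gallCount) :
    (N.numVertices : ℤ) ≤ 3 * (Nat.card X : ℤ) - 2 ∧
    2 * (N.numArcs : ℤ) ≤ 7 * ((Nat.card X : ℤ) - 1) ∧
    (Nat.card X = 3 →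
      (N.numVertices : ℤ) = 3 * (Nat.card X : ℤ) - 2 ∧
      2 * (N.numArcs : ℤ) = 7 * ((Nat.card X : ℤ) - 1) ∧
      N.IsSimple) := by
  have hV := hlev.1.numVertices_eq
  have hA := hlev.1.numArcs_eq
  have hA' := hlev.1.numArcs_add_one
  have hgall := hlev.three_mul_gallCount_le
  have hsub : {v | N.IsSplit v ∧ N.OnGall v} ⊆ {v | N.IsSplit v} := fun _ hv => hv.1
  have hsplit : {v | N.IsSplit v ∧ N.OnGall v}.ncard ≤ N.numSplitVertices :=
    Set.ncard_le_ncard hsub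
  refine ⟨by omega, by omega, fun hn => ⟨by omega, by omega, by omega, fun x u hu => ?_⟩⟩
  rcases hlev.1.trichotomy u with ⟨h, -⟩ | ⟨-, h, -⟩ | ⟨-, -, h, -⟩
  · exact absurd h (hlev.1.1.not_isLeaf_of_arc hu)
  · have hall : {v | N.IsSplit v ∧ N.OnGall v} = {v | N.IsSplit v} :=
      Set.eq_of_subset_of_ncard_le hsub (show N.numSplitVertices ≤ _ by omega)
    exact ((Set.ext_iff.mp hall u).mpr h).2
  · exact hlev.1.1.onGall_of_isHybrid h

/-- a proper binary level-1 network on `n ≥ 3` leaves has at most `3n-2`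
vertices and at most `3.5(n-1)` arcs; for `n = 3` these bounds are tight and the
network must be simple. -/
theorem stmt2 {X : Type} (N : Net X) (hn : 3 ≤ Nat.card X)
    (hlev : N.IsLevel1) (hproper : 1 ≤ N.gallCount) :
    (N.numVertices : ℤ) ≤ 3 * (Nat.card X : ℤ) - 2 ∧
    2 * (N.numArcs : ℤ) ≤ 7 * ((Nat.card X : ℤ) - 1) ∧
    (Nat.card X = 3 →
      (N.numVertices : ℤ) = 3 * (Nat.card X : ℤ) - 2 ∧
      2 * (N.numArcs : ℤ) = 7 * ((Nat.card X : ℤ) - 1) ∧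
      N.IsSimple) :=
  stmt2_general N hlev hproper
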